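/- arXiv:1704.02277 — 2 statements merged into one kernel-verified Lean document; each statement's English description precedes it below -/
import Mathlib

section
/- Let K ⊆ ℝ^n be compact, let μ be a finite positive Borel measure on ℝ^n whose support is contained in K, and let d ∈ ℕ. Then there exist an integer r ≤ C(n+d, n) + 1 (where C(n+d,n) is the number of multi-indices α ∈ ℕ^n with |α| ≤ d), points x^{(1)}, …, x^{(r)} ∈ K, and weights w₁, …, w_r ≥ 0 such that ∫ x^α dμ(x) = Σ_{j=1}^r w_j (x^{(j)})^α for every multi-index α with |α| ≤ d; i.e., the truncated moment sequence of μ admits a finitely atomic representing measure supported on K. -/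
/-!
The moment vector `F v = (v^α)_{|α| ≤ d}` is continuous with values in `ℝ^N`, where the
number `N` of multi-indices is at most `C(n+d, n)` (homogenize them to degree exactly `d`).
As `μ` is concentrated on `K`, the average of `F` lies in the convex set `conv(F(K))`, which
is closed: by Carathéodory, the convex hull of a compact set in finite dimension is a finite
union of continuous images of `simplex × K^r`. Carathéodory again writes this average as a
convex combination of at most `N + 1` values of `F` on `K`; multiplying the weights by
`μ(ℝ^n)` gives the atoms.
-/

open MeasureTheory

noncomputable section

/-- The monomial `x^α = ∏ i, x i ^ α i`. -/
def mono {n : ℕ} (x : Fin n → ℝ) (α : Fin n → ℕ) : ℝ := ∏ i, x i ^ α i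

/-- The (topological) support of a measure. -/
def measureSupport {n : ℕ} (μ : Measure (Fin n → ℝ)) : Set (Fin n → ℝ) :=
  {x | ∀ U : Set (Fin n → ℝ), IsOpen U → x ∈ U → μ U ≠ 0}

open Module

section Caratheodory

variable {𝕜 E : Type*} [Field 𝕜] [LinearOrder 𝕜] [IsStrictOrderedRing 𝕜]
  [AddCommGroup E] [Module 𝕜 E] [FiniteDimensional 𝕜 E]

theorem exists_fin_stdSimplex_of_mem_convexHull {s : Set E} {x : E} (hx : x ∈ convexHull 𝕜 s) :
    ∃ r ≤ finrank 𝕜 E + 1, ∃ (w : Fin r → 𝕜) (z : Fin r → E),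
      w ∈ stdSimplex 𝕜 (Fin r) ∧ (∀ i, z i ∈ s) ∧ ∑ i, w i • z i = x := by
  obtain ⟨ι, _, z, w, hzs, hz, hw, hw₁, rfl⟩ := eq_pos_convex_span_of_mem_convexHull hx
  let e := Fintype.equivFin ι
  refine ⟨Fintype.card ι, hz.card_le_finrank_succ.trans (by grw [Submodule.finrank_le]),
    w ∘ e.symm, z ∘ e.symm, ⟨fun i => (hw _).le, ?_⟩, fun i => hzs ⟨_, rfl⟩, ?_⟩
  · simpa [Function.comp_def, e.symm.sum_comp w] using hw₁
  · exact e.symm.sum_comp fun i => w i • z i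

end Caratheodory

theorem IsCompact.isCompact_convexHull {E : Type*} [AddCommGroup E] [Module ℝ E]
    [TopologicalSpace E] [IsTopologicalAddGroup E] [ContinuousSMul ℝ E] [FiniteDimensional ℝ E]
    {s : Set E} (hs : IsCompact s) : IsCompact (convexHull ℝ s) := by
  have hcarath : convexHull ℝ s = ⋃ r ∈ Finset.range (finrank ℝ E + 2),
      (fun p : (Fin r → ℝ) × (Fin r → E) => ∑ i, p.1 i • p.2 i) ''
        (stdSimplex ℝ (Fin r) ×ˢ Set.univ.pi fun _ => s) := by
    refine subset_antisymm (fun x hx => ?_) (Set.iUnion₂_subset fun r _ => ?_)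
    · obtain ⟨r, hr, w, z, hw, hz, rfl⟩ := exists_fin_stdSimplex_of_mem_convexHull hx
      exact Set.mem_biUnion (Finset.mem_range.2 (by omega))
        ⟨(w, z), ⟨hw, fun i _ => hz i⟩, rfl⟩
    · rintro _ ⟨⟨w, z⟩, ⟨hw, hz⟩, rfl⟩
      exact (convex_convexHull ℝ s).sum_mem (fun i _ => hw.1 i) hw.2
        fun i _ => subset_convexHull ℝ s (hz i trivial)
  rw [hcarath]
  exact (Finset.range _).isCompact_biUnion fun r _ =>
    ((isCompact_stdSimplex ℝ (Fin r)).prod (isCompact_univ_pi fun _ => hs)).image (by fun_prop)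

section Atomic

variable {X E : Type*} [MeasurableSpace X] [TopologicalSpace X] [OpensMeasurableSpace X]
  [T2Space X] {μ : Measure X} [IsFiniteMeasure μ] {K : Set X}
  [NormedAddCommGroup E] {F : X → E}

theorem integrable_of_ae_mem_isCompact (hK : IsCompact K) (hμK : ∀ᵐ x ∂μ, x ∈ K)
    (hF : ContinuousOn F K) : Integrable F μ := by
  simpa [IntegrableOn, Measure.restrict_eq_self_of_ae_mem hμK] using
    hF.integrableOn_compact (μ := μ) hK

theorem exists_fin_integral_eq_sum_of_ae_mem_isCompact [NormedSpace ℝ E] [FiniteDimensional ℝ E]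
    (hK : IsCompact K) (hμK : ∀ᵐ x ∂μ, x ∈ K) (hF : ContinuousOn F K) :
    ∃ r ≤ finrank ℝ E + 1, ∃ (x : Fin r → X) (w : Fin r → ℝ),
      (∀ j, x j ∈ K) ∧ (∀ j, 0 ≤ w j) ∧ ∫ v, F v ∂μ = ∑ j, w j • F (x j) := by
  rcases eq_zero_or_neZero μ with rfl | hμ
  · exact ⟨0, by omega, Fin.elim0, Fin.elim0, (Fin.elim0 ·), (Fin.elim0 ·), by simp⟩
  have havg : ⨍ v, F v ∂μ ∈ convexHull ℝ (F '' K) :=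
    (convex_convexHull ℝ _).average_mem
      (hK.image_of_continuousOn hF).isCompact_convexHull.isClosed
      (hμK.mono fun v hv => subset_convexHull ℝ _ ⟨v, hv, rfl⟩)
      (integrable_of_ae_mem_isCompact hK hμK hF)
  obtain ⟨r, hr, w, z, hw, hz, hsum⟩ := exists_fin_stdSimplex_of_mem_convexHull havg
  choose x hxK hxz using hz
  refine ⟨r, hr, x, fun j => μ.real Set.univ * w j, hxK,
    fun j => mul_nonneg measureReal_nonneg (hw.1 j), ?_⟩
  rw [← measure_smul_average, ← hsum, Finset.smul_sum]
  simp [hxz, mul_smul]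

end Atomic

abbrev MultiIndex (n d : ℕ) : Type := {α : Fin n → ℕ // ∑ i, α i ≤ d}

namespace MultiIndex

/-- `α ↦ (α, d - |α|)`, read as a multiset of size `d` on `Fin (n + 1)`. -/
def homogenize {n d : ℕ} (α : MultiIndex n d) : Sym (Fin (n + 1)) d :=
  (Sym.equivNatSumOfFintype (Fin (n + 1)) d).symm
    ⟨Fin.snoc α.1 (d - ∑ i, α.1 i), by simp [Fin.sum_univ_castSucc, α.2]⟩

theorem homogenize_injective (n d : ℕ) : Function.Injective (homogenize (n := n) (d := d)) := by
  intro α β h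
  ext i
  simpa [homogenize] using congrFun (congrArg Subtype.val (Equiv.injective _ h)) i.castSucc

instance (n d : ℕ) : Fintype (MultiIndex n d) :=
  Fintype.ofInjective _ (homogenize_injective n d)

theorem card_le_choose (n d : ℕ) : Fintype.card (MultiIndex n d) ≤ (n + d).choose n := by
  calc Fintype.card (MultiIndex n d) ≤ Fintype.card (Sym (Fin (n + 1)) d) :=
        Fintype.card_le_of_injective _ (homogenize_injective n d)
    _ = (n + d).choose n := by
        rw [Sym.card_sym_eq_choose, Fintype.card_fin, Nat.add_right_comm, Nat.add_sub_cancel,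
          Nat.choose_symm_add]

end MultiIndex

def momentVector {n : ℕ} (d : ℕ) (v : Fin n → ℝ) : MultiIndex n d → ℝ :=
  fun α => mono v α

theorem continuous_momentVector (n d : ℕ) : Continuous (momentVector (n := n) d) := by
  unfold momentVector mono
  fun_prop

theorem measureSupport_eq_support {n : ℕ} (μ : Measure (Fin n → ℝ)) :
    measureSupport μ = μ.support := by
  simp [measureSupport, Measure.support_eq_forall_isOpen, pos_iff_ne_zero, imp.swap]

/-- If `K ⊆ ℝ^n` is compact, `μ` is a finite positive Borel measure with
support contained in `K`, and `d ∈ ℕ`, then there are `r ≤ C(n+d,n) + 1` points of `K`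
and nonnegative weights whose weighted power sums reproduce all moments of `μ` of degree
at most `d`; i.e. the truncated moment sequence of `μ` admits a finitely atomic
representing measure supported on `K`. -/
theorem finitely_atomic_representing_measure (n d : ℕ) (K : Set (Fin n → ℝ))
    (hK : IsCompact K) (μ : Measure (Fin n → ℝ)) [IsFiniteMeasure μ]
    (hsupp : measureSupport μ ⊆ K) :
    ∃ r : ℕ, r ≤ (n + d).choose n + 1 ∧
      ∃ (x : Fin r → (Fin n → ℝ)) (w : Fin r → ℝ),
        (∀ j, x j ∈ K) ∧ (∀ j, 0 ≤ w j) ∧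
        ∀ α : Fin n → ℕ, (∑ i, α i) ≤ d →
          ∫ v, mono v α ∂μ = ∑ j, w j * mono (x j) α := by
  have hμK : ∀ᵐ v ∂μ, v ∈ K :=
    Filter.mem_of_superset μ.support_mem_ae (measureSupport_eq_support μ ▸ hsupp)
  have hF := (continuous_momentVector n d).continuousOn (s := K)
  obtain ⟨r, hr, x, w, hxK, hw, hμF⟩ :=
    exists_fin_integral_eq_sum_of_ae_mem_isCompact hK hμK hF
  refine ⟨r, ?_, x, w, hxK, hw, fun α hα => ?_⟩
  · rw [finrank_fintype_fun_eq_card] at hr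
    exact hr.trans (by grw [MultiIndex.card_le_choose])
  · simpa [momentVector, eval_integral (integrable_of_ae_mem_isCompact hK hμK hF).eval] using
      congrFun hμF ⟨α, hα⟩
end
end

section
/- Let r ≥ 2 and let u^{(1)}, …, u^{(r)} ∈ ℝ⁴ be vectors with Σ_{k=1}^r Δ_{u^{(k)}} = 0 and such that Δ_{u^{(i)}} < 0 and Δ_{u^{(j)}} > 0 for some indices i ≠ j. Set X = Σ_{k=1}^r u^{(k)} (u^{(k)})ᵀ. Then there exist a weight w ≥ 0, a vector n ∈ ℝ⁴ with n₀ = 1 and n₁² + n₂² + n₃² = 1, and vectors ũ^{(1)}, …, ũ^{(r−1)} ∈ ℝ⁴ such that X = w · n nᵀ + Σ_{k=1}^{r−1} ũ^{(k)} (ũ^{(k)})ᵀ and Σ_{k=1}^{r−1} Δ_{ũ^{(k)}} = 0. -/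
open Matrix

noncomputable section

/-- For `u ∈ ℝ⁴`, `Δ_u := u₀² − u₁² − u₂² − u₃²`. -/
def Delta (u : Fin 4 → ℝ) : ℝ := u 0 ^ 2 - u 1 ^ 2 - u 2 ^ 2 - u 3 ^ 2

/-!
Rotating the pair `(u⁽ⁱ⁾, u⁽ʲ⁾)` to `(c u⁽ⁱ⁾ + s u⁽ʲ⁾, -s u⁽ⁱ⁾ + c u⁽ʲ⁾)` with `c² + s² = 1`
changes neither `u⁽ⁱ⁾u⁽ⁱ⁾ᵀ + u⁽ʲ⁾u⁽ʲ⁾ᵀ` nor `Δ_{u⁽ⁱ⁾} + Δ_{u⁽ʲ⁾}`. As the angle runs from `0` to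
`π/2`, the Δ of the first rotated vector moves from `Δ_{u⁽ⁱ⁾} < 0` to `Δ_{u⁽ʲ⁾} > 0`, so for some
angle it is a null vector `m`, and `m mᵀ = m₀² · n nᵀ` with `n = m / m₀`. The second rotated vector
takes the place of `u⁽ʲ⁾`, and `u⁽ⁱ⁾` is dropped.
-/

theorem Fin.sum_update_succAbove {M : Type*} [AddCommGroup M] {m : ℕ} (f : Fin (m + 1) → M)
    {i j : Fin (m + 1)} (hij : i ≠ j) (x : M) :
    ∑ k, Function.update f j x (i.succAbove k) = ∑ k, f k - f i - f j + x := by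
  have h₁ := Fin.sum_univ_succAbove (Function.update f j x) i
  have h₂ := Finset.sum_update_of_mem (Finset.mem_univ j) f x
  have h₃ := Finset.sum_eq_add_sum_sdiff_singleton_of_mem (Finset.mem_univ j) f
  rw [Function.update_of_ne hij] at h₁
  linear_combination (norm := abel) h₂ - h₁ - h₃

theorem Fin.sum_apply_update_succAbove {α M : Type*} [AddCommGroup M] {m : ℕ} (F : α → M)
    (u : Fin (m + 1) → α) {i j : Fin (m + 1)} (hij : i ≠ j) (x : α) :
    ∑ k, F (Function.update u j x (i.succAbove k)) = ∑ k, F (u k) - F (u i) - F (u j) + F x := by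
  have h := Fin.sum_update_succAbove (F ∘ u) hij (F x)
  rwa [← Function.comp_update] at h

theorem Matrix.vecMulVec_self_add_vecMulVec_self_rotate {R n : Type*} [CommRing R]
    (a b : n → R) {c s : R} (hcs : c ^ 2 + s ^ 2 = 1) :
    vecMulVec (c • a + s • b) (c • a + s • b) + vecMulVec (-s • a + c • b) (-s • a + c • b) =
      vecMulVec a a + vecMulVec b b := by
  ext x y
  simp only [Matrix.add_apply, vecMulVec_apply, Pi.add_apply, Pi.smul_apply, smul_eq_mul]
  linear_combination (a x * a y + b x * b y) * hcs

theorem delta_add_delta_rotate (a b : Fin 4 → ℝ) {c s : ℝ} (hcs : c ^ 2 + s ^ 2 = 1) :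
    Delta (c • a + s • b) + Delta (-s • a + c • b) = Delta a + Delta b := by
  simp only [Delta, Pi.add_apply, Pi.smul_apply, smul_eq_mul]
  linear_combination
    (a 0 ^ 2 - a 1 ^ 2 - a 2 ^ 2 - a 3 ^ 2 + b 0 ^ 2 - b 1 ^ 2 - b 2 ^ 2 - b 3 ^ 2) * hcs

theorem continuous_delta : Continuous Delta := by
  unfold Delta
  fun_prop

theorem exists_rotate_map_eq_zero {E : Type*} [TopologicalSpace E] [AddCommGroup E]
    [Module ℝ E] [ContinuousAdd E] [ContinuousSMul ℝ E] {Q : E → ℝ} (hQ : Continuous Q)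
    {a b : E} (ha : Q a < 0) (hb : 0 < Q b) :
    ∃ c s : ℝ, c ^ 2 + s ^ 2 = 1 ∧ Q (c • a + s • b) = 0 := by
  let f : ℝ → ℝ := fun θ => Q (Real.cos θ • a + Real.sin θ • b)
  have hf : Continuous f := by fun_prop
  have hzero : (0 : ℝ) ∈ Set.Icc (f 0) (f (Real.pi / 2)) := by
    simpa [f] using ⟨ha.le, hb.le⟩
  obtain ⟨θ, -, hθ⟩ := intermediate_value_Icc (by positivity) hf.continuousOn hzero
  exact ⟨Real.cos θ, Real.sin θ, Real.cos_sq_add_sin_sq θ, hθ⟩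

theorem exists_vecMulVec_eq_smul_of_delta_eq_zero {m : Fin 4 → ℝ} (hm : Delta m = 0) :
    ∃ (w : ℝ) (n : Fin 4 → ℝ), 0 ≤ w ∧ n 0 = 1 ∧ n 1 ^ 2 + n 2 ^ 2 + n 3 ^ 2 = 1 ∧
      vecMulVec m m = w • vecMulVec n n := by
  unfold Delta at hm
  by_cases h0 : m 0 = 0
  · have hzero : m = 0 := by
      have hspace : m 1 ^ 2 + m 2 ^ 2 + m 3 ^ 2 = 0 := by rw [h0] at hm; linarith
      ext x
      fin_cases x <;> simp [h0] <;> nlinarith [sq_nonneg (m 1), sq_nonneg (m 2), sq_nonneg (m 3)]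
    refine ⟨0, ![1, 1, 0, 0], le_rfl, rfl, by simp, by simp [hzero]⟩
  · refine ⟨m 0 ^ 2, (m 0)⁻¹ • m, sq_nonneg _, by simp [h0], ?_, ?_⟩
    · simp only [Pi.smul_apply, smul_eq_mul]
      field_simp
      linarith
    · rw [smul_vecMulVec, vecMulVec_smul, smul_smul, smul_smul]
      field_simp
      simp

theorem rank_reduction_step_general (r : ℕ) (u : Fin r → Fin 4 → ℝ)
    (hsum : ∑ k, Delta (u k) = 0)
    (i j : Fin r) (hij : i ≠ j)
    (hi : Delta (u i) < 0) (hj : 0 < Delta (u j)) :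
    ∃ (w : ℝ) (n : Fin 4 → ℝ) (v : Fin (r - 1) → Fin 4 → ℝ),
      0 ≤ w ∧ n 0 = 1 ∧ (n 1) ^ 2 + (n 2) ^ 2 + (n 3) ^ 2 = 1 ∧
      (∑ k, vecMulVec (u k) (u k)) = w • vecMulVec n n + ∑ k, vecMulVec (v k) (v k) ∧
      ∑ k, Delta (v k) = 0 := by
  obtain ⟨c, s, hcs, hnull⟩ := exists_rotate_map_eq_zero continuous_delta hi hj
  obtain ⟨w, n, hw, hn0, hn, hwn⟩ := exists_vecMulVec_eq_smul_of_delta_eq_zero hnull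
  obtain ⟨m, rfl⟩ : ∃ m, r = m + 1 := ⟨r - 1, by have := i.pos; omega⟩
  rw [Nat.add_sub_cancel]
  let b := -s • u i + c • u j
  refine ⟨w, n, fun k => Function.update u j b (i.succAbove k), hw, hn0, hn, ?_, ?_⟩
  · rw [Fin.sum_apply_update_succAbove (fun x => vecMulVec x x) u hij, sub_sub,
      ← vecMulVec_self_add_vecMulVec_self_rotate (u i) (u j) hcs, hwn]
    abel
  · rw [Fin.sum_apply_update_succAbove Delta u hij, hsum, sub_sub,
      ← delta_add_delta_rotate (u i) (u j) hcs, hnull]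
    ring

/-- if `r ≥ 2`, `Σ_k Δ_{u^{(k)}} = 0` and some `Δ_{u^{(i)}} < 0`,
`Δ_{u^{(j)}} > 0` with `i ≠ j`, then `X = Σ_k u^{(k)} (u^{(k)})ᵀ` can be rewritten as
`w · n nᵀ` (with `w ≥ 0`, `n₀ = 1` and unit Bloch vector) plus a sum of `r − 1`
rank-one terms `ũ^{(k)} (ũ^{(k)})ᵀ` with `Σ_k Δ_{ũ^{(k)}} = 0`. -/
theorem rank_reduction_step (r : ℕ) (hr : 2 ≤ r) (u : Fin r → Fin 4 → ℝ)
    (hsum : ∑ k, Delta (u k) = 0)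
    (i j : Fin r) (hij : i ≠ j)
    (hi : Delta (u i) < 0) (hj : 0 < Delta (u j)) :
    ∃ (w : ℝ) (n : Fin 4 → ℝ) (v : Fin (r - 1) → Fin 4 → ℝ),
      0 ≤ w ∧ n 0 = 1 ∧ (n 1) ^ 2 + (n 2) ^ 2 + (n 3) ^ 2 = 1 ∧
      (∑ k, vecMulVec (u k) (u k)) = w • vecMulVec n n + ∑ k, vecMulVec (v k) (v k) ∧
      ∑ k, Delta (v k) = 0 :=
  rank_reduction_step_general r u hsum i j hij hi hj
end
end
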